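/- The effective quantile loss ρ_q^γ with parameter λ satisfies the bounds ρ_q(r) - q(1-q)/(2λ) ≤ ρ_q^γ(r) ≤ ρ_q(r) for all r ∈ ℝ; in particular ρ_q^γ converges uniformly to the check loss ρ_q as λ → ∞. -/

import Mathlib

/-- The check loss `ρ_q`. -/
noncomputable def checkLoss (q r : ℝ) : ℝ := if 0 ≤ r then q * r else (q - 1) * r

/-- The effective quantile loss. -/
noncomputable def effCheckLoss (q lam r : ℝ) : ℝ :=
  if r < -q / lam then (q - 1) * r - q * (1 - q) / (2 * lam)
  else if r < 0 then (lam / 2) * ((1 - q) / q) * r^2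
  else if r < (1 - q) / lam then (lam / 2) * (q / (1 - q)) * r^2
  else q * r - q * (1 - q) / (2 * lam)

/-!
On each half-line `ρ_q^γ` is a Huber loss: the linear loss `x ↦ s x` with its corner at `0`
replaced on `[0, δ]` by the parabola `s x² / (2δ)`, which is tangent at `x = δ` to the line
`s (x - δ/2)`. For `r < 0` take `x = -r`, `s = 1 - q`, `δ = q/λ`; for `r ≥ 0` take `x = r`,
`s = q`, `δ = (1 - q)/λ`; in both cases `s δ / 2 = q(1 - q)/(2λ)`. A parabola lies above its
tangent, and `s x² / (2δ) ≤ s x` on `[0, 2δ]`, so the Huber loss lies between `s (x - δ/2)` and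
`s x`. The gap `q(1 - q)/(2λ)` does not depend on `r`, whence the uniform convergence.
-/

open Filter Topology

noncomputable def huberLoss (s δ x : ℝ) : ℝ :=
  if x < δ then s / (2 * δ) * x ^ 2 else s * (x - δ / 2)

section huberLoss

variable {s δ x : ℝ}

theorem huberLoss_of_ge (h : δ ≤ x) : huberLoss s δ x = s * (x - δ / 2) := by
  rw [huberLoss, if_neg h.not_gt]

theorem huberLoss_of_le (hδ : 0 < δ) (h : x ≤ δ) : huberLoss s δ x = s / (2 * δ) * x ^ 2 := by
  rcases h.lt_or_eq with h | rfl
  · rw [huberLoss, if_pos h]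
  · rw [huberLoss_of_ge le_rfl]
    field_simp
    ring

theorem sub_le_huberLoss (hs : 0 ≤ s) (hδ : 0 < δ) : s * (x - δ / 2) ≤ huberLoss s δ x := by
  rcases lt_or_ge x δ with h | h
  · rw [huberLoss_of_le hδ h.le]
    have gap : s / (2 * δ) * x ^ 2 - s * (x - δ / 2) = s / (2 * δ) * (x - δ) ^ 2 := by
      field_simp
      ring
    have : 0 ≤ s / (2 * δ) * (x - δ) ^ 2 := by positivity
    linarith
  · rw [huberLoss_of_ge h]

theorem huberLoss_le (hs : 0 ≤ s) (hδ : 0 < δ) (hx : 0 ≤ x) : huberLoss s δ x ≤ s * x := by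
  rcases lt_or_ge x δ with h | h
  · rw [huberLoss_of_le hδ h.le]
    have gap : s * x - s / (2 * δ) * x ^ 2 = s / (2 * δ) * x * (2 * δ - x) := by
      field_simp
    have : 0 ≤ s / (2 * δ) * x * (2 * δ - x) := by
      have : 0 ≤ 2 * δ - x := by linarith
      positivity
    linarith
  · rw [huberLoss_of_ge h]
    have := mul_nonneg hs hδ.le
    linarith

end huberLoss

theorem checkLoss_of_neg {q r : ℝ} (hr : r < 0) : checkLoss q r = (1 - q) * -r := by
  rw [checkLoss, if_neg hr.not_ge]
  ring

theorem checkLoss_of_nonneg {q r : ℝ} (hr : 0 ≤ r) : checkLoss q r = q * r := by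
  rw [checkLoss, if_pos hr]

section effCheckLoss

variable {q lam r : ℝ}

theorem effCheckLoss_of_neg (hq : 0 < q) (hlam : 0 < lam) (hr : r < 0) :
    effCheckLoss q lam r = huberLoss (1 - q) (q / lam) (-r) := by
  rw [effCheckLoss, neg_div]
  by_cases h : r < -(q / lam)
  · rw [if_pos h, huberLoss_of_ge (by linarith)]
    field_simp
    ring
  · rw [if_neg h, if_pos hr, huberLoss_of_le (by positivity) (by linarith)]
    field_simp

theorem effCheckLoss_of_nonneg (hq0 : 0 ≤ q) (hq1 : q ≠ 1) (hlam : 0 < lam) (hr : 0 ≤ r) :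
    effCheckLoss q lam r = huberLoss q ((1 - q) / lam) r := by
  have hq1' : 1 - q ≠ 0 := sub_ne_zero.mpr hq1.symm
  have : -q / lam ≤ 0 := div_nonpos_of_nonpos_of_nonneg (by linarith) hlam.le
  rw [effCheckLoss, if_neg (by linarith), if_neg hr.not_gt, huberLoss]
  split_ifs <;> field_simp

theorem checkLoss_sub_le_effCheckLoss (hq : q ∈ Set.Ioo 0 1) (hlam : 0 < lam) :
    checkLoss q r - q * (1 - q) / (2 * lam) ≤ effCheckLoss q lam r := by
  obtain ⟨hq0, hq1⟩ := hq
  rcases lt_or_ge r 0 with hr | hr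
  · rw [checkLoss_of_neg hr, effCheckLoss_of_neg hq0 hlam hr]
    exact (by ring : _ = (1 - q) * (-r - q / lam / 2)).trans_le
      (sub_le_huberLoss (by linarith) (by positivity))
  · rw [checkLoss_of_nonneg hr, effCheckLoss_of_nonneg hq0.le hq1.ne hlam hr]
    exact (by ring : _ = q * (r - (1 - q) / lam / 2)).trans_le
      (sub_le_huberLoss hq0.le (div_pos (by linarith) hlam))

theorem effCheckLoss_le_checkLoss (hq : q ∈ Set.Ioo 0 1) (hlam : 0 < lam) :
    effCheckLoss q lam r ≤ checkLoss q r := by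
  obtain ⟨hq0, hq1⟩ := hq
  rcases lt_or_ge r 0 with hr | hr
  · rw [checkLoss_of_neg hr, effCheckLoss_of_neg hq0 hlam hr]
    exact huberLoss_le (by linarith) (by positivity) (by linarith)
  · rw [checkLoss_of_nonneg hr, effCheckLoss_of_nonneg hq0.le hq1.ne hlam hr]
    exact huberLoss_le hq0.le (div_pos (by linarith) hlam) hr

theorem dist_checkLoss_effCheckLoss_le (hq : q ∈ Set.Ioo 0 1) (hlam : 0 < lam) :
    dist (checkLoss q r) (effCheckLoss q lam r) ≤ q * (1 - q) / (2 * lam) := by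
  have lower := checkLoss_sub_le_effCheckLoss (r := r) hq hlam
  have upper := effCheckLoss_le_checkLoss (r := r) hq hlam
  rw [Real.dist_eq, abs_sub_le_iff]
  constructor <;> linarith

end effCheckLoss

theorem TendstoUniformly.of_dist_le {ι α β : Type*} [PseudoMetricSpace β] {l : Filter ι}
    {F : ι → α → β} {f : α → β} {u : ι → ℝ} (hu : Tendsto u l (𝓝 0))
    (hFf : ∀ᶠ i in l, ∀ x, dist (f x) (F i x) ≤ u i) : TendstoUniformly F f l := by
  rw [Metric.tendstoUniformly_iff]
  intro ε hε
  filter_upwards [hFf, hu.eventually (gt_mem_nhds hε)] with i hi hui x using (hi x).trans_lt hui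

/-- Bounds `ρ_q(r) - q(1-q)/(2λ) ≤ ρ_q^γ(r) ≤ ρ_q(r)`, and uniform convergence of
the effective quantile loss to the check loss as `λ → ∞`. -/
theorem effective_quantile_loss_bounds (q : ℝ) (hq : q ∈ Set.Ioo (0:ℝ) 1) :
    (∀ lam : ℝ, 0 < lam → ∀ r : ℝ,
      checkLoss q r - q * (1 - q) / (2 * lam) ≤ effCheckLoss q lam r ∧
      effCheckLoss q lam r ≤ checkLoss q r) ∧
    TendstoUniformly (fun lam r => effCheckLoss q lam r) (checkLoss q) Filter.atTop := by
  refine ⟨fun lam hlam r =>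
    ⟨checkLoss_sub_le_effCheckLoss hq hlam, effCheckLoss_le_checkLoss hq hlam⟩, ?_⟩
  refine TendstoUniformly.of_dist_le
    ((tendsto_const_nhds (x := q * (1 - q))).div_atTop (tendsto_id.const_mul_atTop two_pos)) ?_
  filter_upwards [eventually_gt_atTop 0] with lam hlam r
  exact dist_checkLoss_effCheckLoss_le hq hlam
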